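/- arXiv:1408.5169 — 5 statements merged into one kernel-verified Lean document; each statement's English description precedes it below -/
import Mathlib

section
/- If x_1, ..., x_{d^2} are unit vectors in ℂ^d representing d^2 equiangular lines (i.e., |⟨x_j, x_k⟩| is a constant a for all j ≠ k), then a = 1/√(d+1). -/
/-!
The map `u ↦ u uᴴ` sends the `d²` lines to `d²` vectors `P_j` in the `d²`-dimensional space of
`d × d` matrices, with Hilbert–Schmidt Gram matrix `(1 - a²) I + a² J`. Distinct lines force
`a < 1`, so this Gram matrix is positive definite and the `P_j` form a basis. Writing the identity
matrix as `∑ c_j P_j` and pairing with `P_k` gives `1 = a² S + (1 - a²) c_k` with `S = ∑ c_j`, while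
`‖I‖² = d` gives `S = d`. Summing over `k` yields `d² = a² d³ + (1 - a²) d`, i.e. `a² = 1/(d + 1)`.
-/

open Finset RCLike
open scoped ComplexConjugate InnerProductSpace

theorem norm_inner_lt_norm_mul_norm_of_linearIndependent {𝕜 E : Type*} [RCLike 𝕜]
    [NormedAddCommGroup E] [InnerProductSpace 𝕜 E] {u v : E}
    (h : LinearIndependent 𝕜 ![u, v]) : ‖⟪u, v⟫_𝕜‖ < ‖u‖ * ‖v‖ := by
  refine (norm_inner_le_norm u v).lt_of_ne fun heq => ?_
  obtain hu | ⟨r, rfl⟩ := (norm_inner_eq_norm_tfae 𝕜 u v).out 0 2 |>.mp heq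
  · exact h.ne_zero 0 hu
  · simpa using LinearIndependent.pair_iff.mp h r (-1) (by simp)

section EquiangularGram

variable {𝕜 E ι : Type*} [RCLike 𝕜] [NormedAddCommGroup E] [InnerProductSpace 𝕜 E]
  [Fintype ι] [DecidableEq ι] {y : ι → E} {b : ℝ}

theorem inner_sum_smul_of_inner_eq_ite
    (hy : ∀ j k, ⟪y j, y k⟫_𝕜 = if j = k then 1 else (b : 𝕜)) (c : ι → 𝕜) (k : ι) :
    ⟪y k, ∑ j, c j • y j⟫_𝕜 = b * ∑ j, c j + (1 - b) * c k := by
  have hterm : ∀ j, c j * ⟪y k, y j⟫_𝕜 = b * c j + if k = j then (1 - b) * c j else 0 := by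
    intro j
    rw [hy]
    split_ifs <;> ring
  simp only [inner_sum, inner_smul_right, hterm, sum_add_distrib, ← mul_sum, sum_ite_eq,
    mem_univ, if_true]

theorem norm_sum_smul_sq_of_inner_eq_ite
    (hy : ∀ j k, ⟪y j, y k⟫_𝕜 = if j = k then 1 else (b : 𝕜)) (c : ι → 𝕜) :
    ‖∑ j, c j • y j‖ ^ 2 = (1 - b) * ∑ j, ‖c j‖ ^ 2 + b * ‖∑ j, c j‖ ^ 2 := by
  have h : (‖∑ j, c j • y j‖ ^ 2 : 𝕜) = (1 - b) * ∑ j, ‖c j‖ ^ 2 + b * ‖∑ j, c j‖ ^ 2 := by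
    rw [← inner_self_eq_norm_sq_to_K, sum_inner]
    simp only [inner_smul_left, inner_sum_smul_of_inner_eq_ite hy, mul_add, sum_add_distrib,
      ← sum_mul, ← map_sum, mul_left_comm _ (b : 𝕜), ← mul_sum, mul_left_comm _ (1 - (b : 𝕜)),
      RCLike.conj_mul]
    push_cast
    ring
  exact_mod_cast h

theorem linearIndependent_of_inner_eq_ite
    (hy : ∀ j k, ⟪y j, y k⟫_𝕜 = if j = k then 1 else (b : 𝕜)) (hb₀ : 0 ≤ b) (hb₁ : b < 1) :
    LinearIndependent 𝕜 y := by
  rw [Fintype.linearIndependent_iff]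
  intro c hc i
  have hsum : ∑ j, ‖c j‖ ^ 2 = 0 := by
    have := norm_sum_smul_sq_of_inner_eq_ite hy c
    rw [hc, norm_zero] at this
    nlinarith [sum_nonneg fun j (_ : j ∈ univ) => sq_nonneg ‖c j‖, sq_nonneg ‖∑ j, c j‖]
  simpa using (sum_eq_zero_iff_of_nonneg fun j _ => sq_nonneg ‖c j‖).mp hsum i (mem_univ i)

theorem card_eq_mul_norm_sq_of_inner_eq_ite
    (hy : ∀ j k, ⟪y j, y k⟫_𝕜 = if j = k then 1 else (b : 𝕜))
    {z : E} (hz : z ∈ Submodule.span 𝕜 (Set.range y)) (hyz : ∀ k, ⟪y k, z⟫_𝕜 = 1) :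
    (Fintype.card ι : ℝ) = (b * Fintype.card ι + 1 - b) * ‖z‖ ^ 2 := by
  obtain ⟨c, rfl⟩ := (Submodule.mem_span_range_iff_exists_fun 𝕜).mp hz
  have hc : ∀ k, (1 : 𝕜) = b * ∑ j, c j + (1 - b) * c k := fun k =>
    (hyz k).symm.trans (inner_sum_smul_of_inner_eq_ite hy c k)
  have hnorm : (‖∑ j, c j • y j‖ ^ 2 : 𝕜) = conj (∑ j, c j) := by
    simp [← inner_self_eq_norm_sq_to_K, sum_inner, inner_smul_left, hyz]
  have hS : ∑ j, c j = (‖∑ j, c j • y j‖ ^ 2 : 𝕜) := by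
    simpa using (congrArg conj hnorm).symm
  have hsum : ∑ _k : ι, (1 : 𝕜) = ∑ k, (b * ∑ j, c j + (1 - b) * c k) :=
    sum_congr rfl fun k _ => hc k
  simp only [sum_const, card_univ, nsmul_eq_mul, mul_one, sum_add_distrib, ← mul_sum, hS] at hsum
  exact_mod_cast (hsum.trans (by push_cast; ring) :
    (Fintype.card ι : 𝕜) = ((b * Fintype.card ι + 1 - b) * ‖∑ j, c j • y j‖ ^ 2 : ℝ))

end EquiangularGram

section RankOne

variable {𝕜 ι : Type*} [RCLike 𝕜] [Fintype ι]

/-- The matrix `u uᴴ`, flattened to a vector of `𝕜^(ι × ι)`: the inner product there is the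
Hilbert–Schmidt inner product of matrices. -/
noncomputable def outerSelf (u : EuclideanSpace 𝕜 ι) : EuclideanSpace 𝕜 (ι × ι) :=
  WithLp.toLp 2 fun p => u p.1 * conj (u p.2)

noncomputable def flatOne [DecidableEq ι] : EuclideanSpace 𝕜 (ι × ι) :=
  WithLp.toLp 2 fun p => (1 : Matrix ι ι 𝕜) p.1 p.2

theorem inner_outerSelf (u v : EuclideanSpace 𝕜 ι) :
    ⟪outerSelf u, outerSelf v⟫_𝕜 = (‖⟪u, v⟫_𝕜‖ ^ 2 : 𝕜) := by
  rw [← RCLike.mul_conj]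
  simp only [PiLp.inner_apply, RCLike.inner_apply, outerSelf, map_sum, map_mul, conj_conj,
    Fintype.sum_prod_type, sum_mul_sum]
  exact sum_congr rfl fun p _ => sum_congr rfl fun q _ => by ring

theorem inner_outerSelf_flatOne [DecidableEq ι] (u : EuclideanSpace 𝕜 ι) :
    ⟪outerSelf u, flatOne⟫_𝕜 = (‖u‖ ^ 2 : 𝕜) := by
  rw [← inner_self_eq_norm_sq_to_K]
  simp only [PiLp.inner_apply, RCLike.inner_apply, outerSelf, flatOne, Fintype.sum_prod_type,
    Matrix.one_apply, ite_mul, one_mul, zero_mul, sum_ite_eq, mem_univ, if_true, map_mul,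
    conj_conj]
  exact sum_congr rfl fun _ _ => mul_comm _ _

theorem norm_flatOne_sq [DecidableEq ι] :
    ‖(flatOne : EuclideanSpace 𝕜 (ι × ι))‖ ^ 2 = Fintype.card ι := by
  rw [EuclideanSpace.norm_sq_eq, Fintype.sum_prod_type]
  simp [flatOne, Matrix.one_apply, apply_ite (‖·‖), sum_ite_eq]

end RankOne

/-- If `x_1, ..., x_{d^2}` are unit vectors in `ℂ^d` representing `d^2` equiangular
lines (pairwise linearly independent, and `‖⟪x j, x k⟫‖ = a` for all `j ≠ k`),
then `a = 1/√(d+1)`. -/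
theorem stmt_0 (d : ℕ) (hd : 2 ≤ d) (x : Fin (d ^ 2) → EuclideanSpace ℂ (Fin d))
    (hunit : ∀ j, ‖x j‖ = 1)
    (hindep : ∀ j k, j ≠ k → LinearIndependent ℂ ![x j, x k])
    (a : ℝ) (ha : 0 ≤ a)
    (hang : ∀ j k, j ≠ k → ‖(inner ℂ (x j) (x k) : ℂ)‖ = a) :
    a = 1 / Real.sqrt (d + 1) := by
  have hd2 : 1 < d ^ 2 := by nlinarith
  have ha₁ : a < 1 := by
    have h01 : (⟨0, by omega⟩ : Fin (d ^ 2)) ≠ ⟨1, hd2⟩ := by simp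
    simpa [hang _ _ h01, hunit] using
      norm_inner_lt_norm_mul_norm_of_linearIndependent (hindep _ _ h01)
  have hgram : ∀ j k, ⟪outerSelf (x j), outerSelf (x k)⟫_ℂ =
      if j = k then 1 else ((a ^ 2 : ℝ) : ℂ) := by
    intro j k
    rw [inner_outerSelf]
    split_ifs with h
    · simp [h, hunit]
    · simp [hang j k h]
  have hspan : Submodule.span ℂ (Set.range fun j => outerSelf (x j)) = ⊤ :=
    (linearIndependent_of_inner_eq_ite hgram (sq_nonneg a) (pow_lt_one₀ ha ha₁ two_ne_zero)
      ).span_eq_top_of_card_eq_finrank' (by simp [finrank_euclideanSpace, sq])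
  have hcount := card_eq_mul_norm_sq_of_inner_eq_ite (b := a ^ 2) hgram
    (hspan ▸ Submodule.mem_top) fun k => by rw [inner_outerSelf_flatOne, hunit]; simp
  rw [norm_flatOne_sq, Fintype.card_fin, Fintype.card_fin] at hcount
  push_cast at hcount
  have ha2 : a ^ 2 * (d + 1) = 1 := by
    have hpos : (0 : ℝ) < d * (d - 1) := by
      have : (2 : ℝ) ≤ d := mod_cast hd
      nlinarith
    have h : (a ^ 2 * (d + 1) - 1) * (d * (d - 1)) = 0 := by linear_combination -hcount
    linarith [(mul_eq_zero.mp h).resolve_right hpos.ne']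
  rw [eq_div_iff (by positivity), ← Real.sqrt_sq ha, ← Real.sqrt_mul (sq_nonneg a), ha2,
    Real.sqrt_one]
end

section
/- The maximum number of equiangular lines in ℂ^d is at most d^2: any set of unit vectors in ℂ^d, pairwise linearly independent, with all pairwise inner product magnitudes equal to a common constant a with 0 ≤ a < 1, has size at most d^2. -/
/-!
Lift each unit vector `x j` to the rank-one matrix `x j (x j)ᴴ`, viewed as a vector of
`ℂ^(d × d)`. The lifted vectors have inner products `|⟨x j, x k⟩|²`, so their Gram matrix is
`(1 - a²) I + a² J`, which is positive definite because `a² < 1`. Hence the `m` lifted vectors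
are linearly independent in a space of dimension `d²`.
-/

section ConstantGram

variable {𝕜 E ι : Type*} [RCLike 𝕜] [NormedAddCommGroup E] [InnerProductSpace 𝕜 E] [Fintype ι]

theorem eq_zero_of_forall_mul_add_mul_sum_eq_zero {c : ι → 𝕜} {b : ℝ} (hb0 : 0 ≤ b)
    (hb1 : b < 1) (h : ∀ k, (1 - b : 𝕜) * c k + b * ∑ i, c i = 0) : c = 0 := by
  have hS : ∑ i, c i = 0 := by
    have hsum : ((1 - b + Fintype.card ι * b : ℝ) : 𝕜) * ∑ i, c i = 0 := by
      rw [← Finset.sum_eq_zero fun k _ => h k, Finset.sum_add_distrib, ← Finset.mul_sum,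
        Finset.sum_const, Finset.card_univ, nsmul_eq_mul]
      push_cast
      ring
    refine (mul_eq_zero.mp hsum).resolve_left ?_
    exact_mod_cast (by positivity : (0 : ℝ) < 1 - b + Fintype.card ι * b).ne'
  funext k
  have hk := h k
  rw [hS, mul_zero, add_zero] at hk
  exact (mul_eq_zero.mp hk).resolve_left (by exact_mod_cast (sub_pos.mpr hb1).ne')

theorem linearIndependent_of_inner_eq_const {v : ι → E} {b : ℝ} (hb0 : 0 ≤ b) (hb1 : b < 1)
    (hself : ∀ i, inner 𝕜 (v i) (v i) = 1) (hoff : ∀ i j, i ≠ j → inner 𝕜 (v i) (v j) = (b : 𝕜)) :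
    LinearIndependent 𝕜 v := by
  classical
  rw [Fintype.linearIndependent_iff]
  intro c hc
  refine congrFun (eq_zero_of_forall_mul_add_mul_sum_eq_zero hb0 hb1 fun k => ?_)
  have hk := congrArg (inner 𝕜 (v k)) hc
  rw [inner_sum, inner_zero_right, Fintype.sum_eq_add_sum_compl k] at hk
  have hoff' : ∀ j ∈ ({k}ᶜ : Finset ι), inner 𝕜 (v k) (c j • v j) = b * c j := fun j hj => by
    rw [inner_smul_right, hoff k j (by simpa [eq_comm] using hj), mul_comm]
  rw [inner_smul_right, hself, mul_one, Finset.sum_congr rfl hoff', ← Finset.mul_sum] at hk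
  rw [Fintype.sum_eq_add_sum_compl k, ← hk]
  ring

end ConstantGram

section SelfOuter

variable {𝕜 n : Type*} [RCLike 𝕜] [Fintype n]

def selfOuter (v : EuclideanSpace 𝕜 n) : EuclideanSpace 𝕜 (n × n) :=
  WithLp.toLp 2 fun p => v p.1 * starRingEnd 𝕜 (v p.2)

theorem inner_selfOuter (v w : EuclideanSpace 𝕜 n) :
    inner 𝕜 (selfOuter v) (selfOuter w) = ((‖inner 𝕜 v w‖ ^ 2 : ℝ) : 𝕜) := by
  have hsum : inner 𝕜 (selfOuter v) (selfOuter w)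
      = inner 𝕜 v w * starRingEnd 𝕜 (inner 𝕜 v w) := by
    simp only [selfOuter, PiLp.inner_apply, RCLike.inner_apply, map_sum, Finset.sum_mul_sum,
      Fintype.sum_prod_type, map_mul, RCLike.conj_conj]
    refine Fintype.sum_congr _ _ fun i => Fintype.sum_congr _ _ fun j => ?_
    ring
  rw [hsum, RCLike.mul_conj, RCLike.ofReal_pow]

end SelfOuter

theorem stmt_1_general (d m : ℕ) (x : Fin m → EuclideanSpace ℂ (Fin d))
    (hunit : ∀ j, ‖x j‖ = 1)
    (a : ℝ) (ha0 : 0 ≤ a) (ha1 : a < 1)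
    (hang : ∀ j k, j ≠ k → ‖(inner ℂ (x j) (x k) : ℂ)‖ = a) :
    m ≤ d ^ 2 := by
  have hli : LinearIndependent ℂ fun j => selfOuter (x j) :=
    linearIndependent_of_inner_eq_const (sq_nonneg a) (pow_lt_one₀ ha0 ha1 two_ne_zero)
      (fun j => by rw [inner_selfOuter, inner_self_eq_norm_sq_to_K, hunit]; norm_num)
      (fun j k hjk => by rw [inner_selfOuter, hang j k hjk])
  simpa [sq] using hli.fintype_card_le_finrank

/-- The maximum number of equiangular lines in `ℂ^d` is at most `d^2`: any family of
unit vectors in `ℂ^d`, pairwise linearly independent, with all pairwise inner product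
magnitudes equal to a common constant `a` with `0 ≤ a < 1`, has size at most `d^2`. -/
theorem stmt_1 (d m : ℕ) (x : Fin m → EuclideanSpace ℂ (Fin d))
    (hunit : ∀ j, ‖x j‖ = 1)
    (hindep : ∀ j k, j ≠ k → LinearIndependent ℂ ![x j, x k])
    (a : ℝ) (ha0 : 0 ≤ a) (ha1 : a < 1)
    (hang : ∀ j k, j ≠ k → ‖(inner ℂ (x j) (x k) : ℂ)‖ = a) :
    m ≤ d ^ 2 :=
  stmt_1_general d m x hunit a ha0 ha1 hang
end

section
/- A set of mutually unbiased bases in ℂ^d has size at most d+1. -/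
/-!
Identify `d × d` matrices with `ℂ^(d × d)` under the Hilbert–Schmidt inner product. A unit vector
`x` gives the projector `|x⟩⟨x|`, and `⟪|x⟩⟨x|, |y⟩⟨y|⟫ = |⟪x, y⟫|²`. Removing from each projector
its component `1/d · I` along the identity, the traceless parts coming from two unbiased bases are
orthogonal, and all of them are orthogonal to `I`. The traceless parts of one basis, together with
`I`, span its `d` (orthonormal) projectors, so they span a space of dimension at least `d - 1`.
Hence `n` bases give mutually orthogonal subspaces of total dimension at least `n (d - 1) + 1`
inside a space of dimension `d²`, i.e. `n ≤ d + 1`.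
-/

open Module Submodule
open scoped InnerProductSpace ComplexConjugate

theorem OrthogonalFamily.sum_finrank_le {𝕜 E ι : Type*} [RCLike 𝕜] [NormedAddCommGroup E]
    [InnerProductSpace 𝕜 E] [FiniteDimensional 𝕜 E] [Fintype ι] {V : ι → Submodule 𝕜 E}
    (hV : OrthogonalFamily 𝕜 (fun i => V i) fun i => (V i).subtypeₗᵢ) :
    ∑ i, finrank 𝕜 (V i) ≤ finrank 𝕜 E := by
  simpa using (hV.orthonormal_sigma_orthonormal fun i =>
    (stdOrthonormalBasis 𝕜 (V i)).orthonormal).linearIndependent.fintype_card_le_finrank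

theorem orthogonalFamily_span {𝕜 E ι : Type*} [RCLike 𝕜] [NormedAddCommGroup E]
    [InnerProductSpace 𝕜 E] {s : ι → Set E}
    (h : ∀ i j, i ≠ j → ∀ u ∈ s i, ∀ v ∈ s j, ⟪u, v⟫_𝕜 = 0) :
    OrthogonalFamily 𝕜 (fun i => span 𝕜 (s i)) fun i => (span 𝕜 (s i)).subtypeₗᵢ :=
  OrthogonalFamily.of_pairwise fun i j hij => isOrtho_span.mpr (h i j hij)

namespace MUB

variable {𝕜 ι : Type*} [RCLike 𝕜] [Fintype ι]

/-- `EuclideanSpace 𝕜 (ι × ι)` stands for the matrices over `ι` with the Hilbert–Schmidt inner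
product; `projVec x` is the matrix `|x⟩⟨x|` and `oneVec` the identity matrix. -/
noncomputable def projVec (x : EuclideanSpace 𝕜 ι) : EuclideanSpace 𝕜 (ι × ι) :=
  WithLp.toLp 2 fun p => x p.1 * conj (x p.2)

def oneVec [DecidableEq ι] : EuclideanSpace 𝕜 (ι × ι) :=
  WithLp.toLp 2 fun p => if p.1 = p.2 then 1 else 0

theorem inner_projVec_projVec (x y : EuclideanSpace 𝕜 ι) :
    ⟪projVec x, projVec y⟫_𝕜 = (‖⟪x, y⟫_𝕜‖ : 𝕜) ^ 2 := by
  rw [← RCLike.conj_mul]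
  simp only [projVec, PiLp.inner_apply, RCLike.inner_apply, Fintype.sum_prod_type, map_sum,
    map_mul, RCLike.conj_conj, Finset.sum_mul, Finset.mul_sum]
  refine Finset.sum_congr rfl fun a _ => Finset.sum_congr rfl fun b _ => ?_
  ring

theorem inner_oneVec_projVec [DecidableEq ι] (x : EuclideanSpace 𝕜 ι) :
    ⟪oneVec, projVec x⟫_𝕜 = (‖x‖ : 𝕜) ^ 2 := by
  rw [← inner_self_eq_norm_sq_to_K]
  simp only [oneVec, projVec, PiLp.inner_apply, RCLike.inner_apply, Fintype.sum_prod_type,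
    apply_ite (starRingEnd 𝕜), map_one, map_zero, mul_ite, mul_one, mul_zero, Finset.sum_ite_eq,
    Finset.mem_univ, if_true]

theorem inner_oneVec_oneVec [DecidableEq ι] :
    ⟪(oneVec : EuclideanSpace 𝕜 (ι × ι)), oneVec⟫_𝕜 = Fintype.card ι := by
  simp only [oneVec, PiLp.inner_apply, RCLike.inner_apply, Fintype.sum_prod_type]
  simp

theorem orthonormal_projVec {κ : Type*} {b : κ → EuclideanSpace 𝕜 ι} (hb : Orthonormal 𝕜 b) :
    Orthonormal 𝕜 (projVec ∘ b) := by
  classical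
  rw [orthonormal_iff_ite] at hb ⊢
  intro j k
  rw [Function.comp_apply, Function.comp_apply, inner_projVec_projVec, hb]
  split_ifs <;> simp

variable [DecidableEq ι]

theorem oneVec_ne_zero [Nonempty ι] : (oneVec : EuclideanSpace 𝕜 (ι × ι)) ≠ 0 := by
  rw [← inner_self_ne_zero (𝕜 := 𝕜), inner_oneVec_oneVec]
  exact Nat.cast_ne_zero.mpr Fintype.card_ne_zero

noncomputable def tracelessVec (x : EuclideanSpace 𝕜 ι) : EuclideanSpace 𝕜 (ι × ι) :=
  projVec x - (Fintype.card ι : 𝕜)⁻¹ • oneVec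

theorem inner_oneVec_tracelessVec [Nonempty ι] {x : EuclideanSpace 𝕜 ι} (hx : ‖x‖ = 1) :
    ⟪oneVec, tracelessVec x⟫_𝕜 = 0 := by
  rw [tracelessVec, inner_sub_right, inner_smul_right, inner_oneVec_projVec, inner_oneVec_oneVec,
    hx, inv_mul_cancel₀ (Nat.cast_ne_zero.mpr Fintype.card_ne_zero)]
  simp

theorem inner_tracelessVec_tracelessVec [Nonempty ι] {x y : EuclideanSpace 𝕜 ι} (hx : ‖x‖ = 1)
    (hy : ‖y‖ = 1) :
    ⟪tracelessVec x, tracelessVec y⟫_𝕜 = (‖⟪x, y⟫_𝕜‖ : 𝕜) ^ 2 - (Fintype.card ι : 𝕜)⁻¹ := by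
  nth_rw 2 [tracelessVec]
  rw [inner_sub_right, inner_smul_right, ← inner_conj_symm (tracelessVec x) oneVec,
    inner_oneVec_tracelessVec hx, map_zero, mul_zero, sub_zero, tracelessVec, inner_sub_left,
    inner_smul_left, inner_projVec_projVec, inner_oneVec_projVec, hy]
  simp

theorem card_le_finrank_span_tracelessVec_add_one [Nonempty ι] {κ : Type*} [Fintype κ]
    {b : κ → EuclideanSpace 𝕜 ι} (hb : Orthonormal 𝕜 b) :
    Fintype.card κ ≤ finrank 𝕜 (span 𝕜 (Set.range (tracelessVec ∘ b))) + 1 := by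
  have hspan : span 𝕜 (Set.range (projVec ∘ b)) ≤
      span 𝕜 (Set.range (tracelessVec ∘ b)) ⊔ 𝕜 ∙ oneVec := by
    rw [span_le]
    rintro _ ⟨j, rfl⟩
    have : projVec (b j) = tracelessVec (b j) + (Fintype.card ι : 𝕜)⁻¹ • oneVec :=
      (sub_add_cancel _ _).symm
    rw [Function.comp_apply, this]
    exact add_mem_sup (subset_span ⟨j, rfl⟩) (smul_mem _ _ (mem_span_singleton_self _))
  calc Fintype.card κ = finrank 𝕜 (span 𝕜 (Set.range (projVec ∘ b))) :=
        (finrank_span_eq_card (orthonormal_projVec hb).linearIndependent).symm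
    _ ≤ finrank 𝕜 ↥(span 𝕜 (Set.range (tracelessVec ∘ b)) ⊔ 𝕜 ∙ oneVec) :=
        finrank_mono hspan
    _ ≤ _ := by
        grw [finrank_add_le_finrank_add_finrank, finrank_span_singleton oneVec_ne_zero]

theorem card_mul_sub_one_add_one_le_sq [Nonempty ι] {β κ : Type*} [Fintype β] [Fintype κ]
    (B : β → κ → EuclideanSpace 𝕜 ι) (horth : ∀ i, Orthonormal 𝕜 (B i))
    (hub : ∀ i i', i ≠ i' → ∀ j k, ‖⟪B i j, B i' k⟫_𝕜‖ ^ 2 = (Fintype.card ι : ℝ)⁻¹) :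
    Fintype.card β * (Fintype.card κ - 1) + 1 ≤ Fintype.card ι ^ 2 := by
  let s : Option β → Set (EuclideanSpace 𝕜 (ι × ι)) :=
    fun o => o.elim {oneVec} fun i => Set.range (tracelessVec ∘ B i)
  have hV : OrthogonalFamily 𝕜 (fun o => span 𝕜 (s o)) fun o => (span 𝕜 (s o)).subtypeₗᵢ := by
    refine orthogonalFamily_span ?_
    rintro (_ | i) (_ | i') hne u hu v hv
    · exact absurd rfl hne
    · obtain ⟨k, rfl⟩ := hv
      rw [Set.mem_singleton_iff.mp hu]
      exact inner_oneVec_tracelessVec ((horth i').1 k)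
    · obtain ⟨j, rfl⟩ := hu
      rw [Set.mem_singleton_iff.mp hv, ← inner_conj_symm, Function.comp_apply,
        inner_oneVec_tracelessVec ((horth i).1 j), map_zero]
    · obtain ⟨j, rfl⟩ := hu
      obtain ⟨k, rfl⟩ := hv
      rw [Function.comp_apply, Function.comp_apply,
        inner_tracelessVec_tracelessVec ((horth i).1 j) ((horth i').1 k), ← RCLike.ofReal_pow,
        hub i i' (fun h => hne (congrArg some h))]
      simp
  have hsum := hV.sum_finrank_le
  rw [Fintype.sum_option, finrank_euclideanSpace, Fintype.card_prod] at hsum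
  have hone : finrank 𝕜 (span 𝕜 (s none)) = 1 := finrank_span_singleton oneVec_ne_zero
  calc Fintype.card β * (Fintype.card κ - 1) + 1 = ∑ _ : β, (Fintype.card κ - 1) + 1 := by simp
    _ ≤ ∑ i, finrank 𝕜 (span 𝕜 (s (some i))) + 1 := by
        gcongr with i
        have : Fintype.card κ ≤ finrank 𝕜 (span 𝕜 (s (some i))) + 1 :=
          card_le_finrank_span_tracelessVec_add_one (horth i)
        omega
    _ ≤ Fintype.card ι ^ 2 := by rw [sq]; omega

end MUB

/-- A set of mutually unbiased bases in `ℂ^d` has size at most `d+1`: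
if `B i` (for `i : Fin n`) are orthonormal bases of `ℂ^d` such that every pair of
distinct bases is unbiased (all inner products between their elements have
magnitude `1/√d`), then `n ≤ d + 1`. -/
theorem stmt_2 (d n : ℕ) (hd : 2 ≤ d)
    (B : Fin n → Fin d → EuclideanSpace ℂ (Fin d))
    (horth : ∀ i, Orthonormal ℂ (B i))
    (hub : ∀ i i', i ≠ i' → ∀ j k,
      ‖(inner ℂ (B i j) (B i' k) : ℂ)‖ = 1 / Real.sqrt d) :
    n ≤ d + 1 := by
  have : Nonempty (Fin d) := ⟨⟨0, by omega⟩⟩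
  have hbound := MUB.card_mul_sub_one_add_one_le_sq B horth fun i i' hne j k => by
    rw [hub i i' hne, div_pow, one_pow, Real.sq_sqrt (Nat.cast_nonneg d), Fintype.card_fin,
      one_div]
  simp only [Fintype.card_fin] at hbound
  obtain ⟨e, rfl⟩ : ∃ e, d = e + 2 := ⟨d - 2, by omega⟩
  have hmul : n * (e + 1) ≤ (e + 3) * (e + 1) := by
    have : n * (e + 1) + 1 ≤ (e + 2) ^ 2 := hbound
    nlinarith
  exact Nat.le_of_mul_le_mul_right hmul e.succ_pos
end

section
/- Let d ≥ 2, let R be a (d,d,d,1)-RDS in an abelian group giving MUB vectors with unit-modulus entries, let π ∈ S_d, and let a,b ∈ ℝ. In the set of d² vectors in ℂ^{2d} formed by concatenating corresponding vectors of L(π, a+ib) and L(π, 2-a-ib), every inner product between distinct vectors has magnitude 2(b² + (a-1)²) (when the two vectors come from the same basis block) or 2√d (when they come from different basis blocks). -/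
/-! Scaling coordinate `π j` of the `j`-th basis by `u` changes an inner product only in the
coordinates `π j` and `π j'`. For the pair `(v, 2 - v)` the first-order corrections cancel,
`(v - 1) + ((2 - v) - 1) = 0`, while for vectors of one basis the second-order correction
adds up to `(|v|² - 1) + (|2 - v|² - 1) = 2|v - 1|²`. Distinct vectors of one basis are
orthogonal and entries have modulus one, so only this correction survives; across bases the
inner product is doubled. -/

open Complex

/-- The vector of the `j`-th basis block indexed by `m`, with entry `π j`
multiplied by `v`. -/
def modVec {d : ℕ} (B : Fin d → Fin d → Fin d → ℂ) (π : Equiv.Perm (Fin d))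
    (v : ℂ) (j m : Fin d) : Fin d → ℂ :=
  fun ℓ => if ℓ = π j then v * B j m ℓ else B j m ℓ

/-- The concatenation in `ℂ^{2d}` of the vector of `L(π,v)` and the corresponding
vector of `L(π,v')`. -/
def concVec {d : ℕ} (B : Fin d → Fin d → Fin d → ℂ) (π : Equiv.Perm (Fin d))
    (v v' : ℂ) (j m : Fin d) : Fin d ⊕ Fin d → ℂ :=
  Sum.elim (modVec B π v j m) (modVec B π v' j m)

open ComplexConjugate

section
variable {d : ℕ} (B : Fin d → Fin d → Fin d → ℂ) (π : Equiv.Perm (Fin d))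

theorem sum_concVec_mul_conj (v v' : ℂ) (j m j' m' : Fin d) :
    ∑ ℓ, concVec B π v v' j m ℓ * conj (concVec B π v v' j' m' ℓ) =
      ∑ ℓ, modVec B π v j m ℓ * conj (modVec B π v j' m' ℓ) +
        ∑ ℓ, modVec B π v' j m ℓ * conj (modVec B π v' j' m' ℓ) :=
  Fintype.sum_sum_type _

theorem sum_modVec_mul_conj_same (u : ℂ) (j m m' : Fin d) :
    ∑ ℓ, modVec B π u j m ℓ * conj (modVec B π u j m' ℓ) =
      ∑ ℓ, B j m ℓ * conj (B j m' ℓ) +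
        (normSq u - 1) * (B j m (π j) * conj (B j m' (π j))) := by
  have hterm : ∀ ℓ, modVec B π u j m ℓ * conj (modVec B π u j m' ℓ) =
      B j m ℓ * conj (B j m' ℓ) +
        if ℓ = π j then (normSq u - 1) * (B j m ℓ * conj (B j m' ℓ)) else 0 := by
    intro ℓ
    simp only [modVec]
    split_ifs
    · rw [map_mul, ← mul_conj]; ring
    · ring
  simp only [hterm, Finset.sum_add_distrib, Finset.sum_ite_eq', Finset.mem_univ, if_true]

theorem sum_modVec_mul_conj_of_ne (u : ℂ) {j j' : Fin d} (hjj : j ≠ j') (m m' : Fin d) :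
    ∑ ℓ, modVec B π u j m ℓ * conj (modVec B π u j' m' ℓ) =
      ∑ ℓ, B j m ℓ * conj (B j' m' ℓ) +
        (u - 1) * (B j m (π j) * conj (B j' m' (π j))) +
        (conj u - 1) * (B j m (π j') * conj (B j' m' (π j'))) := by
  have hπ : π j ≠ π j' := π.injective.ne hjj
  have hterm : ∀ ℓ, modVec B π u j m ℓ * conj (modVec B π u j' m' ℓ) =
      B j m ℓ * conj (B j' m' ℓ) +
        (if ℓ = π j then (u - 1) * (B j m ℓ * conj (B j' m' ℓ)) else 0) +
        if ℓ = π j' then (conj u - 1) * (B j m ℓ * conj (B j' m' ℓ)) else 0 := by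
    intro ℓ
    simp only [modVec]
    split_ifs with h h'
    · exact absurd (h ▸ h') hπ
    · ring
    · rw [map_mul]; ring
    · ring
  simp only [hterm, Finset.sum_add_distrib, Finset.sum_ite_eq', Finset.mem_univ, if_true]

theorem sum_concVec_reflect_mul_conj_same (v : ℂ) (j m m' : Fin d) :
    ∑ ℓ, concVec B π v (2 - v) j m ℓ * conj (concVec B π v (2 - v) j m' ℓ) =
      2 * ∑ ℓ, B j m ℓ * conj (B j m' ℓ) +
        2 * normSq (v - 1) * (B j m (π j) * conj (B j m' (π j))) := by
  have hnormSq : (normSq v - 1 : ℂ) + (normSq (2 - v) - 1) = 2 * normSq (v - 1) := by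
    simp only [← mul_conj, map_sub, map_ofNat, map_one]; ring
  rw [sum_concVec_mul_conj, sum_modVec_mul_conj_same, sum_modVec_mul_conj_same]
  linear_combination (B j m (π j) * conj (B j m' (π j))) * hnormSq

theorem sum_concVec_reflect_mul_conj_of_ne (v : ℂ) {j j' : Fin d} (hjj : j ≠ j')
    (m m' : Fin d) :
    ∑ ℓ, concVec B π v (2 - v) j m ℓ * conj (concVec B π v (2 - v) j' m' ℓ) =
      2 * ∑ ℓ, B j m ℓ * conj (B j' m' ℓ) := by
  rw [sum_concVec_mul_conj, sum_modVec_mul_conj_of_ne B π _ hjj,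
    sum_modVec_mul_conj_of_ne B π _ hjj, map_sub, map_ofNat]
  ring

end

theorem stmt_14_general (d : ℕ) (B : Fin d → Fin d → Fin d → ℂ)
    (hmod : ∀ j m ℓ, ‖B j m ℓ‖ = 1)
    (horth : ∀ j m m', m ≠ m' →
      ∑ ℓ, B j m ℓ * (starRingEnd ℂ) (B j m' ℓ) = 0)
    (hub : ∀ j j', j ≠ j' → ∀ m m',
      ‖∑ ℓ, B j m ℓ * (starRingEnd ℂ) (B j' m' ℓ)‖ = Real.sqrt d)
    (π : Equiv.Perm (Fin d)) (a b : ℝ) :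
    ∀ j m j' m', (j, m) ≠ (j', m') →
      ‖(∑ ℓ, concVec B π ((a : ℂ) + b * I) (2 - a - b * I) j m ℓ *
          (starRingEnd ℂ) (concVec B π ((a : ℂ) + b * I) (2 - a - b * I) j' m' ℓ))‖ =
        if j = j' then 2 * (b ^ 2 + (a - 1) ^ 2) else 2 * Real.sqrt d := by
  intro j m j' m' hne
  rw [show (2 - a - b * I : ℂ) = 2 - (a + b * I) by ring]
  split_ifs with hjj
  · subst hjj
    have hmm : m ≠ m' := fun h => hne (h ▸ rfl)
    have hnormSq : normSq (a + b * I - 1) = b ^ 2 + (a - 1) ^ 2 := by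
      rw [show (a + b * I - 1 : ℂ) = ↑(a - 1) + b * I by push_cast; ring, normSq_add_mul_I]
      ring
    rw [sum_concVec_reflect_mul_conj_same, horth j m m' hmm, ← hnormSq]
    simp [hmod, normSq_nonneg]
  · rw [sum_concVec_reflect_mul_conj_of_ne B π _ hjj, norm_mul, hub j j' hjj, Complex.norm_two]

/-- Let `d ≥ 2` and let `B j` (`j = 1,…,d`) be the `d` MUBs in `ℂ^d` built from a
`(d,d,d,1)`-RDS: all entries have modulus 1, distinct vectors of the same basis are
orthogonal, and vectors of distinct bases have inner products of magnitude `√d`.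
Let `π ∈ S_d` and `a, b ∈ ℝ`.  Among the `d²` concatenated vectors
`[L(π, a+ib) | L(π, 2-a-ib)]` in `ℂ^{2d}`, the inner product of two distinct vectors
has magnitude `2(b² + (a-1)²)` if they come from the same basis block, and `2√d` if
they come from different basis blocks. -/
theorem stmt_14 (d : ℕ) (hd : 2 ≤ d) (B : Fin d → Fin d → Fin d → ℂ)
    (hmod : ∀ j m ℓ, ‖B j m ℓ‖ = 1)
    (horth : ∀ j m m', m ≠ m' →
      ∑ ℓ, B j m ℓ * (starRingEnd ℂ) (B j m' ℓ) = 0)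
    (hub : ∀ j j', j ≠ j' → ∀ m m',
      ‖∑ ℓ, B j m ℓ * (starRingEnd ℂ) (B j' m' ℓ)‖ = Real.sqrt d)
    (π : Equiv.Perm (Fin d)) (a b : ℝ) :
    ∀ j m j' m', (j, m) ≠ (j', m') →
      ‖(∑ ℓ, concVec B π ((a : ℂ) + b * I) (2 - a - b * I) j m ℓ *
          (starRingEnd ℂ) (concVec B π ((a : ℂ) + b * I) (2 - a - b * I) j' m' ℓ))‖ =
        if j = j' then 2 * (b ^ 2 + (a - 1) ^ 2) else 2 * Real.sqrt d :=
  stmt_14_general d B hmod horth hub π a b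
end

section
/- Let x, y be vectors in ℂ^d with all entries roots of unity and |⟨x,y⟩| = √d, let π(j) ≠ π(k) be two coordinate positions, and let x(v), y(v) be obtained from x, y by multiplying entry π(j) of x by v and entry π(k) of y by v. Then for v = a+ib and v' = 2-a-ib, the concatenated vectors (x(v)|x(v')) and (y(v)|y(v')) in ℂ^{2d} satisfy ⟨(x(v)|x(v')), (y(v)|y(v'))⟩ = 2⟨x,y⟩, which has magnitude 2√d. -/
open Complex

section ScaledCoordinates

variable {R ι : Type*} [CommSemiring R] [StarRing R] [DecidableEq ι]

-- As `p ≠ q`, each coordinate is scaled on at most one side, and there `v + v' = 2`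
-- (or its conjugate) turns the two copies into twice the original term.
theorem scale_at_mul_star_add_scale_at_mul_star {p q : ι} (hpq : p ≠ q) {v v' : R}
    (hvv' : v + v' = 2) (x y : ι → R) (ℓ : ι) :
    (if ℓ = p then v * x ℓ else x ℓ) * starRingEnd R (if ℓ = q then v * y ℓ else y ℓ) +
      (if ℓ = p then v' * x ℓ else x ℓ) * starRingEnd R (if ℓ = q then v' * y ℓ else y ℓ) =
      2 * (x ℓ * starRingEnd R (y ℓ)) := by
  have hstar : starRingEnd R v + starRingEnd R v' = 2 := by
    rw [← map_add, hvv', map_ofNat]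
  by_cases hp : ℓ = p
  · have hq : ℓ ≠ q := hp ▸ hpq
    rw [if_pos hp, if_pos hp, if_neg hq, if_neg hq, ← add_mul, ← add_mul, hvv', mul_assoc]
  · by_cases hq : ℓ = q
    · rw [if_neg hp, if_neg hp, if_pos hq, if_pos hq, map_mul, map_mul, ← hstar]
      ring
    · rw [if_neg hp, if_neg hp, if_neg hq, if_neg hq, two_mul]

theorem sum_sumElim_scale_at_mul_star [Fintype ι] {p q : ι} (hpq : p ≠ q) {v v' : R}
    (hvv' : v + v' = 2) (x y : ι → R) :
    ∑ ℓ : ι ⊕ ι,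
        Sum.elim (fun ℓ => if ℓ = p then v * x ℓ else x ℓ)
                 (fun ℓ => if ℓ = p then v' * x ℓ else x ℓ) ℓ *
        starRingEnd R
          (Sum.elim (fun ℓ => if ℓ = q then v * y ℓ else y ℓ)
                    (fun ℓ => if ℓ = q then v' * y ℓ else y ℓ) ℓ) =
      2 * ∑ ℓ, x ℓ * starRingEnd R (y ℓ) := by
  rw [Fintype.sum_sum_type, Finset.mul_sum, ← Finset.sum_add_distrib]
  exact Finset.sum_congr rfl fun ℓ _ => scale_at_mul_star_add_scale_at_mul_star hpq hvv' x y ℓ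

end ScaledCoordinates

theorem stmt_19_general (d : ℕ) (x y : Fin d → ℂ)
    (hxy : ‖∑ ℓ, x ℓ * (starRingEnd ℂ) (y ℓ)‖ = Real.sqrt d)
    (p q : Fin d) (hpq : p ≠ q) (a b : ℝ) (v v' : ℂ)
    (hv : v = (a : ℂ) + b * I) (hv' : v' = 2 - a - b * I) :
    (∑ ℓ : Fin d ⊕ Fin d,
        Sum.elim (fun ℓ => if ℓ = p then v * x ℓ else x ℓ)
                 (fun ℓ => if ℓ = p then v' * x ℓ else x ℓ) ℓ *
        (starRingEnd ℂ)
          (Sum.elim (fun ℓ => if ℓ = q then v * y ℓ else y ℓ)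
                    (fun ℓ => if ℓ = q then v' * y ℓ else y ℓ) ℓ)) =
      2 * ∑ ℓ, x ℓ * (starRingEnd ℂ) (y ℓ) ∧
    ‖2 * ∑ ℓ, x ℓ * (starRingEnd ℂ) (y ℓ)‖ = 2 * Real.sqrt d := by
  have hvv' : v + v' = 2 := by rw [hv, hv']; ring
  refine ⟨sum_sumElim_scale_at_mul_star hpq hvv' x y, ?_⟩
  rw [norm_mul, hxy, Complex.norm_two]

/-- Let `x, y ∈ ℂ^d` have all entries roots of unity with `|⟨x,y⟩| = √d`, let
`p ≠ q` be coordinate positions, and let `x(v)` (resp. `y(v)`) be obtained from `x`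
(resp. `y`) by multiplying entry `p` of `x` (resp. entry `q` of `y`) by `v`.  Then
for `v = a+ib` and `v' = 2-a-ib`, the concatenated vectors `(x(v)|x(v'))` and
`(y(v)|y(v'))` in `ℂ^{2d}` satisfy
`⟨(x(v)|x(v')), (y(v)|y(v'))⟩ = 2⟨x,y⟩`, which has magnitude `2√d`. -/
theorem stmt_19 (d : ℕ) (hd : 1 ≤ d) (x y : Fin d → ℂ)
    (hx : ∀ ℓ, ∃ n : ℕ, 0 < n ∧ x ℓ ^ n = 1)
    (hy : ∀ ℓ, ∃ n : ℕ, 0 < n ∧ y ℓ ^ n = 1)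
    (hxy : ‖∑ ℓ, x ℓ * (starRingEnd ℂ) (y ℓ)‖ = Real.sqrt d)
    (p q : Fin d) (hpq : p ≠ q) (a b : ℝ) (v v' : ℂ)
    (hv : v = (a : ℂ) + b * I) (hv' : v' = 2 - a - b * I) :
    (∑ ℓ : Fin d ⊕ Fin d,
        Sum.elim (fun ℓ => if ℓ = p then v * x ℓ else x ℓ)
                 (fun ℓ => if ℓ = p then v' * x ℓ else x ℓ) ℓ *
        (starRingEnd ℂ)
          (Sum.elim (fun ℓ => if ℓ = q then v * y ℓ else y ℓ)
                    (fun ℓ => if ℓ = q then v' * y ℓ else y ℓ) ℓ)) =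
      2 * ∑ ℓ, x ℓ * (starRingEnd ℂ) (y ℓ) ∧
    ‖2 * ∑ ℓ, x ℓ * (starRingEnd ℂ) (y ℓ)‖ = 2 * Real.sqrt d :=
  stmt_19_general d x y hxy p q hpq a b v v' hv hv'
end
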